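/- arXiv:2305.10797 — 3 statements merged into one kernel-verified Lean document; each statement's English description precedes it below -/
import Mathlib

section
/- (Fremlin–Miller) Every separable metrizable space of cardinality strictly less than 𝔡 has the Menger property. -/
open Filter Set Cardinal TopologicalSpace

/-- `s ≤* t`: eventual domination. -/
def EvLE (s t : ℕ → ℕ) : Prop := ∀ᶠ n in Filter.atTop, s n ≤ t n

/-- The Menger covering property. -/
def MengerSpace (X : Type*) [TopologicalSpace X] : Prop :=
  ∀ U : ℕ → Set (Set X), (∀ n, ∀ V ∈ U n, IsOpen V) → (∀ n, ⋃₀ U n = Set.univ) →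
    ∃ V : ℕ → Finset (Set X), (∀ n, ↑(V n) ⊆ U n) ∧
      (⋃ n, ⋃₀ (V n : Set (Set X))) = Set.univ

/-- The bounding number 𝔟. -/
noncomputable def bCard : Cardinal :=
  sInf {c | ∃ B : Set (ℕ → ℕ), Cardinal.mk B = c ∧ ¬ ∃ t, ∀ s ∈ B, EvLE s t}

/-- The dominating number 𝔡. -/
noncomputable def dCard : Cardinal :=
  sInf {c | ∃ D : Set (ℕ → ℕ), Cardinal.mk D = c ∧ ∀ s, ∃ t ∈ D, EvLE s t}

/-- Perfect map: continuous, closed, compact fibers. -/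
def IsPerfectMap {X Y : Type*} [TopologicalSpace X] [TopologicalSpace Y] (f : X → Y) : Prop :=
  Continuous f ∧ IsClosedMap f ∧ ∀ y, IsCompact (f ⁻¹' {y})

/-- A family of size less than 𝔡 is not dominating. -/
lemma not_dominating {D : Set (ℕ → ℕ)} (h : Cardinal.mk D < dCard) :
    ∃ g : ℕ → ℕ, ∀ s ∈ D, ∃ n, s n < g n := by
  by_contra hcon
  push_neg at hcon
  have hD : ∀ g : ℕ → ℕ, ∃ s ∈ D, EvLE g s := by
    intro g
    obtain ⟨s, hs, hle⟩ := hcon g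
    exact ⟨s, hs, Filter.Eventually.of_forall hle⟩
  have : dCard ≤ Cardinal.mk D := csInf_le' ⟨D, rfl, hD⟩
  exact absurd (lt_of_lt_of_le h this) (lt_irrefl _)

theorem stmt_4 (X : Type) [TopologicalSpace X] [SeparableSpace X] [MetrizableSpace X]
    (h : Cardinal.mk X < dCard) : MengerSpace X := by
  letI : MetricSpace X := TopologicalSpace.metrizableSpaceMetric X
  haveI : SecondCountableTopology X := UniformSpace.secondCountable_of_separable X
  classical
  intro U hopen hcov
  rcases isEmpty_or_nonempty X with hX | hX
  · refine ⟨fun _ => ∅, fun n => by simp, ?_⟩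
    ext x; exact (hX.false x).elim
  -- extract countable subcovers
  have hsub : ∀ n, ∃ W : ℕ → Set X, (∀ k, W k ∈ U n) ∧ (⋃ k, W k) = Set.univ := by
    intro n
    obtain ⟨T, hTc, hTU, hTun⟩ := TopologicalSpace.isOpen_sUnion_countable (U n) (hopen n)
    rw [hcov n] at hTun
    have hTne : T.Nonempty := by
      rcases Set.eq_empty_or_nonempty T with he | hne
      · exfalso
        obtain ⟨x⟩ := hX
        have : x ∈ ⋃₀ T := hTun ▸ Set.mem_univ x
        simp [he] at this
      · exact hne
    obtain ⟨W, hW⟩ := (Set.countable_iff_exists_surjective hTne).mp hTc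
    refine ⟨fun k => W k, fun k => hTU (W k).2, ?_⟩
    apply Set.eq_univ_of_univ_subset
    rw [← hTun]
    intro x hx
    obtain ⟨t, htT, hxt⟩ := hx
    obtain ⟨k, hk⟩ := hW ⟨t, htT⟩
    exact Set.mem_iUnion.2 ⟨k, by rw [hk]; exact hxt⟩
  choose W hWU hWcov using hsub
  -- for each point define the "first index" function
  have hmem : ∀ (x : X) (n : ℕ), ∃ k, x ∈ W n k := by
    intro x n
    have := (hWcov n) ▸ Set.mem_univ x
    exact Set.mem_iUnion.1 this
  choose f hf using fun x : X => fun n => hmem x n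
  -- the family of functions has size < 𝔡
  set D : Set (ℕ → ℕ) := Set.range f with hDdef
  have hDcard : Cardinal.mk D < dCard :=
    lt_of_le_of_lt Cardinal.mk_range_le h
  obtain ⟨g, hg⟩ := not_dominating hDcard
  refine ⟨fun n => (Finset.range (g n)).image (W n), ?_, ?_⟩
  · intro n V hV
    simp only [Finset.coe_image, Set.mem_image, Finset.coe_range, Set.mem_Iio] at hV
    obtain ⟨k, _, rfl⟩ := hV
    exact hWU n k
  · apply Set.eq_univ_of_univ_subset
    intro x _
    obtain ⟨n, hn⟩ := hg (f x) ⟨x, rfl⟩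
    refine Set.mem_iUnion.2 ⟨n, ⟨W n (f x n), ?_, hf x n⟩⟩
    simp only [Finset.coe_image, Set.mem_image, Finset.coe_range, Set.mem_Iio]
    exact ⟨f x n, hn, rfl⟩
end

section
/- The product of a compact space with a space having the Menger property has the Menger property. -/
open Filter Set Cardinal TopologicalSpace

theorem stmt_8 {K M : Type*} [TopologicalSpace K] [TopologicalSpace M]
    [CompactSpace K] (hM : MengerSpace M) : MengerSpace (K × M) := by
  classical
  intro U hUo hUc
  have key : ∀ n (m : M), ∃ (w : Set M) (F : Finset (Set (K × M))),
      IsOpen w ∧ m ∈ w ∧ ↑F ⊆ U n ∧ (Set.univ : Set K) ×ˢ w ⊆ ⋃₀ ↑F := by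
    intro n m
    have hc : IsCompact ((Set.univ : Set K) ×ˢ ({m} : Set M)) :=
      isCompact_univ.prod isCompact_singleton
    have hcov : (Set.univ : Set K) ×ˢ ({m} : Set M) ⊆ ⋃ V ∈ U n, V := by
      rw [← sUnion_eq_biUnion, hUc n]; exact subset_univ _
    obtain ⟨b, hbU, hbfin, hbcov⟩ :=
      hc.elim_finite_subcover_image (fun V hV => hUo n V hV) hcov
    have hopen : IsOpen (⋃ V ∈ b, V) :=
      isOpen_biUnion fun V hV => hUo n V (hbU hV)
    obtain ⟨u, w, _, hwo, hKu, hmw, huw⟩ :=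
      generalized_tube_lemma isCompact_univ isCompact_singleton hopen hbcov
    refine ⟨w, hbfin.toFinset, hwo, hmw rfl, ?_, ?_⟩
    · intro V hV
      simp only [Finite.coe_toFinset] at hV
      exact hbU hV
    · intro p hp
      have : p ∈ ⋃ V ∈ b, V := huw ⟨hKu trivial, hp.2⟩
      simpa [sUnion_eq_biUnion, Finite.coe_toFinset] using this
  choose w F hwo hmw hFU hsub using key
  obtain ⟨Vs, hVsub, hVcov⟩ := hM (fun n => Set.range (w n))
    (by rintro n _ ⟨m, rfl⟩; exact hwo n m)
    (by
      intro n
      apply eq_univ_of_forall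
      intro m
      exact ⟨w n m, ⟨m, rfl⟩, hmw n m⟩)
  have hmem : ∀ n, ∀ s ∈ Vs n, ∃ m, w n m = s := fun n s hs => hVsub n hs
  choose pt hpt using hmem
  refine ⟨fun n => (Vs n).attach.biUnion (fun s => F n (pt n s.1 s.2)), ?_, ?_⟩
  · intro n V hV
    simp only [Finset.coe_biUnion, Finset.mem_coe, Finset.mem_attach, iUnion_true,
      mem_iUnion] at hV
    obtain ⟨s, hs⟩ := hV
    exact hFU n _ hs
  · apply eq_univ_of_forall
    rintro ⟨k, m⟩
    have hm : m ∈ ⋃ n, ⋃₀ (Vs n : Set (Set M)) := hVcov ▸ mem_univ m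
    obtain ⟨n, s, hsV, hms⟩ := by simpa using hm
    have h2 : (k, m) ∈ ⋃₀ ↑(F n (pt n s hsV)) :=
      hsub n (pt n s hsV) ⟨trivial, by rw [hpt n s hsV]; exact hms⟩
    obtain ⟨V, hVF, hpV⟩ := h2
    refine mem_iUnion.2 ⟨n, V, ?_, hpV⟩
    simp only [Finset.coe_biUnion, Finset.mem_coe, Finset.mem_attach, iUnion_true, mem_iUnion]
    exact ⟨⟨s, hsV⟩, hVF⟩
end

section
/- Assume 𝔟 < 𝔡 and let B ⊆ ℕ^ℕ be unbounded of cardinality 𝔟, f : ℕ^ℕ → X a perfect surjection onto a Polish space X. Then M = f(B) satisfies: every finite power M^m has the Menger property, and M is not contained in any σ-compact subset of X. -/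
open Filter Set Cardinal TopologicalSpace

/-!
Since `f` is perfect, it is a proper map, so the preimage of a σ-compact set containing `f '' B`
is a σ-compact subset of `ℕ → ℕ` containing `B`. Compact subsets of `ℕ → ℕ` are bounded
pointwise and countably many functions are `≤*`-bounded by a diagonal function, so σ-compact
sets are `≤*`-bounded, while `B` is not.

On the other hand every finite power of `f '' B` is a second countable space of cardinality
`≤ 𝔟 < 𝔡`, and such spaces are Menger (Hurewicz): reduce the `n`-th cover to a countable
subcover `c n`, and send each point `x` to the function `n ↦ min {k | x ∈ c n k}`. Fewer than
`𝔡` functions do not dominate some `h`, so each point lies in `c n k` for some `n` and `k < h n`.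
-/

theorem EvLE.trans {s t u : ℕ → ℕ} (hst : EvLE s t) (htu : EvLE t u) : EvLE s u :=
  (hst.and htu).mono fun _ h => h.1.trans h.2

theorem exists_forall_evLE_of_countable {α : Type*} [Countable α] (g : α → ℕ → ℕ) :
    ∃ t, ∀ a, EvLE (g a) t := by
  cases isEmpty_or_nonempty α
  · exact ⟨0, isEmptyElim⟩
  obtain ⟨e, he⟩ := exists_surjective_nat α
  refine ⟨fun n => (Finset.range (n + 1)).sup fun k => g (e k) n, fun a => ?_⟩
  obtain ⟨k, rfl⟩ := he a
  filter_upwards [eventually_ge_atTop k] with n hkn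
  exact Finset.le_sup (f := fun k => g (e k) n) (Finset.mem_range.mpr (Nat.lt_succ_of_le hkn))

theorem exists_forall_not_evLE_of_countable {α : Type*} [Countable α] (g : α → ℕ → ℕ) :
    ∃ s, ∀ a, ¬ EvLE s (g a) := by
  obtain ⟨t, ht⟩ := exists_forall_evLE_of_countable g
  refine ⟨t + 1, fun a hle => ?_⟩
  obtain ⟨n, hn⟩ := (hle.trans (ht a)).exists
  exact Nat.not_succ_le_self (t n) hn

theorem aleph0_le_dCard : ℵ₀ ≤ dCard := by
  refine le_csInf ⟨_, univ, rfl, fun s => ⟨s, mem_univ s, .of_forall fun _ => le_rfl⟩⟩ ?_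
  rintro _ ⟨D, rfl, hD⟩
  by_contra! hlt
  have : Countable D := mk_le_aleph0_iff.mp hlt.le
  obtain ⟨s, hs⟩ := exists_forall_not_evLE_of_countable (Subtype.val : D → ℕ → ℕ)
  obtain ⟨t, htD, hst⟩ := hD s
  exact hs ⟨t, htD⟩ hst

theorem exists_forall_not_evLE_of_mk_lt_dCard {α : Type} (g : α → ℕ → ℕ) (hα : #α < dCard) :
    ∃ s, ∀ a, ¬ EvLE s (g a) := by
  by_contra! hdom
  have : dCard ≤ #(range g) :=
    csInf_le' ⟨range g, rfl, fun s => (hdom s).elim fun a h => ⟨g a, mem_range_self a, h⟩⟩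
  exact (this.trans mk_range_le).not_gt hα

theorem mk_fin_arrow_lt_dCard {M : Type} (m : ℕ) (hM : #M < dCard) : #(Fin m → M) < dCard := by
  rw [mk_arrow, lift_id, mk_fin, lift_natCast, power_natCast]
  rcases lt_or_ge #M ℵ₀ with hfin | hinf
  · exact (power_lt_aleph0 hfin (natCast_lt_aleph0 (n := m))).trans_le aleph0_le_dCard
  · rcases Nat.eq_zero_or_pos m with rfl | hm
    · simpa using one_lt_aleph0.trans_le aleph0_le_dCard
    · rwa [power_nat_eq hinf hm]

theorem exists_seq_subcover {Z : Type*} [TopologicalSpace Z] [SecondCountableTopology Z]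
    [Nonempty Z] {U : Set (Set Z)} (hU : ∀ V ∈ U, IsOpen V) (hcov : ⋃₀ U = Set.univ) :
    ∃ c : ℕ → Set Z, (∀ k, c k ∈ U) ∧ ⋃ k, c k = Set.univ := by
  obtain ⟨T, hTc, hTU, hT⟩ := isOpen_sUnion_countable U hU
  have hTne : T.Nonempty := by
    by_contra! hTe
    simp [hTe, hcov, eq_comm (a := (∅ : Set Z))] at hT
  obtain ⟨c, rfl⟩ := hTc.exists_eq_range hTne
  exact ⟨c, fun k => hTU (mem_range_self k), by rw [← sUnion_range, hT, hcov]⟩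

theorem mengerSpace_of_mk_lt_dCard (Z : Type) [TopologicalSpace Z] [SecondCountableTopology Z]
    (hZ : #Z < dCard) : MengerSpace Z := by
  classical
  intro U hUopen hUcov
  cases isEmpty_or_nonempty Z
  · exact ⟨fun _ => ∅, by simp, Subsingleton.elim _ _⟩
  choose c hcU hc using fun n => exists_seq_subcover (hUopen n) (hUcov n)
  have hmem : ∀ x n, ∃ k, x ∈ c n k := fun x n => mem_iUnion.mp (hc n ▸ mem_univ x)
  obtain ⟨h, hh⟩ := exists_forall_not_evLE_of_mk_lt_dCard (fun x n => Nat.find (hmem x n)) hZ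
  refine ⟨fun n => (Finset.range (h n)).image (c n), fun n => ?_, eq_univ_of_forall fun x => ?_⟩
  · simp [Set.subset_def, hcU]
  · obtain ⟨n, hn⟩ := (not_eventually.mp (hh x)).exists
    refine mem_iUnion.mpr ⟨n, c n _, ?_, Nat.find_spec (hmem x n)⟩
    simpa using ⟨_, not_le.mp hn, rfl⟩

theorem IsCompact.bddAbove_nat_fun {K : Set (ℕ → ℕ)} (hK : IsCompact K) : BddAbove K :=
  bddAbove_pi.mpr fun j => (hK.image (continuous_apply j)).bddAbove

theorem IsSigmaCompact.exists_forall_evLE {K : Set (ℕ → ℕ)} (hK : IsSigmaCompact K) :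
    ∃ t, ∀ s ∈ K, EvLE s t := by
  obtain ⟨C, hC, rfl⟩ := hK
  choose u hu using fun n => (hC n).bddAbove_nat_fun
  obtain ⟨t, ht⟩ := exists_forall_evLE_of_countable u
  refine ⟨t, fun s hs => ?_⟩
  obtain ⟨n, hn⟩ := mem_iUnion.mp hs
  exact (EvLE.trans (.of_forall (hu n hn)) (ht n))

theorem IsProperMap.isSigmaCompact_preimage {X Y : Type*} [TopologicalSpace X]
    [TopologicalSpace Y] {f : X → Y} (hf : IsProperMap f) {K : Set Y} (hK : IsSigmaCompact K) :
    IsSigmaCompact (f ⁻¹' K) := by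
  obtain ⟨C, hC, rfl⟩ := hK
  exact ⟨fun n => f ⁻¹' C n, fun n => hf.isCompact_preimage (hC n), preimage_iUnion.symm⟩

theorem stmt_17_general (X : Type) [TopologicalSpace X] [PolishSpace X]
    (hbd : bCard < dCard)
    (B : Set (ℕ → ℕ)) (hBunb : ¬ ∃ t, ∀ s ∈ B, EvLE s t) (hBcard : Cardinal.mk B = bCard)
    (f : (ℕ → ℕ) → X) (hf : IsPerfectMap f) :
    (∀ m : ℕ, MengerSpace (Fin m → ↥(f '' B))) ∧
      ¬ ∃ K : Set X, IsSigmaCompact K ∧ f '' B ⊆ K := by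
  refine ⟨fun m => ?_, ?_⟩
  · have hfB : #(f '' B) < dCard := mk_image_le.trans_lt (hBcard ▸ hbd)
    exact mengerSpace_of_mk_lt_dCard _ (mk_fin_arrow_lt_dCard m hfB)
  · rintro ⟨K, hK, hBK⟩
    have hproper : IsProperMap f := isProperMap_iff_isClosedMap_and_compact_fibers.mpr hf
    obtain ⟨t, ht⟩ := (hproper.isSigmaCompact_preimage hK).exists_forall_evLE
    exact hBunb ⟨t, fun s hs => ht s (hBK (mem_image_of_mem f hs))⟩

theorem stmt_17 (X : Type) [TopologicalSpace X] [PolishSpace X]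
    (hbd : bCard < dCard)
    (B : Set (ℕ → ℕ)) (hBunb : ¬ ∃ t, ∀ s ∈ B, EvLE s t) (hBcard : Cardinal.mk B = bCard)
    (f : (ℕ → ℕ) → X) (hf : IsPerfectMap f) (hsurj : Function.Surjective f) :
    (∀ m : ℕ, MengerSpace (Fin m → ↥(f '' B))) ∧
      ¬ ∃ K : Set X, IsSigmaCompact K ∧ f '' B ⊆ K :=
  stmt_17_general X hbd B hBunb hBcard f hf
end
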